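/- Let H be a Hilbert space, ε > 0, and let C_YX, Ĉ_YX be bounded operators on H and C_XX, Ĉ_XX bounded self-adjoint positive semidefinite operators on H. Then ‖Ĉ_YX(Ĉ_XX + εI)^{-1} − C_YX(C_XX + εI)^{-1}‖ ≤ (1/ε)‖Ĉ_YX − C_YX‖ + (‖C_YX‖/ε²)‖Ĉ_XX − C_XX‖. -/

import Mathlib

open scoped RealInnerProductSpace

/-!
Write `A = C_XX + εI` and `Â = Ĉ_XX + εI`, so that `A R = 1` and `R̂ Â = Â R̂ = 1`. Positivity of
`C_XX` makes `A` coercive with constant `ε`, so `ε‖R x‖ ≤ ‖A (R x)‖ = ‖x‖`, i.e. `‖R‖ ≤ 1/ε`, and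
likewise for `R̂`. The resolvent identity `R̂ - R = R̂ (A - Â) R` then bounds
`‖R̂ - R‖ ≤ ‖Â - A‖/ε²`, and `Ŷ R̂ - Y R = (Ŷ - Y) R̂ + Y (R̂ - R)` gives the estimate.
-/

section NormedRing

variable {α : Type*} [NormedRing α]

theorem sub_eq_mul_sub_mul_of_mul_eq_one {a a' r r' : α} (hr' : r' * a' = 1) (hr : a * r = 1) :
    r' - r = r' * (a - a') * r := by
  rw [mul_sub, sub_mul, mul_assoc, hr, hr', mul_one, one_mul]

theorem norm_mul_sub_mul_le_of_mul_eq_one {y y' a a' r r' : α} {M : ℝ}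
    (hrM : ‖r‖ ≤ M) (hr'M : ‖r'‖ ≤ M) (hr' : r' * a' = 1) (hr : a * r = 1) :
    ‖y' * r' - y * r‖ ≤ M * ‖y' - y‖ + ‖y‖ * M ^ 2 * ‖a' - a‖ := by
  have hM : 0 ≤ M := (norm_nonneg r).trans hrM
  have hres : ‖r' - r‖ ≤ M ^ 2 * ‖a' - a‖ :=
    calc ‖r' - r‖ = ‖r' * (a - a') * r‖ := by rw [sub_eq_mul_sub_mul_of_mul_eq_one hr' hr]
      _ ≤ ‖r'‖ * ‖a - a'‖ * ‖r‖ := norm_mul₃_le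
      _ ≤ M * ‖a' - a‖ * M := by rw [norm_sub_rev]; gcongr
      _ = M ^ 2 * ‖a' - a‖ := by ring
  calc ‖y' * r' - y * r‖ = ‖(y' - y) * r' + y * (r' - r)‖ := by noncomm_ring
    _ ≤ ‖y' - y‖ * ‖r'‖ + ‖y‖ * ‖r' - r‖ := norm_add_le_of_le (norm_mul_le _ _) (norm_mul_le _ _)
    _ ≤ ‖y' - y‖ * M + ‖y‖ * (M ^ 2 * ‖a' - a‖) := by gcongr
    _ = M * ‖y' - y‖ + ‖y‖ * M ^ 2 * ‖a' - a‖ := by ring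

end NormedRing

namespace ContinuousLinearMap

theorem norm_le_inv_of_comp_eq_one {E : Type*} [NormedAddCommGroup E] [NormedSpace ℝ E]
    {S R : E →L[ℝ] E} {ε : ℝ} (hε : 0 < ε) (hS : ∀ y, ε * ‖y‖ ≤ ‖S y‖) (hSR : S ∘L R = 1) :
    ‖R‖ ≤ ε⁻¹ :=
  opNorm_le_bound _ (inv_nonneg.2 hε.le) fun x => by
    have hx : S (R x) = x := by simpa using congr($hSR x)
    rw [inv_mul_eq_div, le_div_iff₀' hε]
    simpa only [hx] using hS (R x)

variable {H : Type*} [NormedAddCommGroup H] [InnerProductSpace ℝ H]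

theorem mul_norm_le_norm_apply_of_coercive {S : H →L[ℝ] H} {ε : ℝ}
    (hS : ∀ y, ε * ‖y‖ ^ 2 ≤ ⟪S y, y⟫) (y : H) : ε * ‖y‖ ≤ ‖S y‖ := by
  rcases (norm_nonneg y).eq_or_lt with hy | hy
  · rw [← hy, mul_zero]
    exact norm_nonneg _
  · refine le_of_mul_le_mul_right ?_ hy
    calc ε * ‖y‖ * ‖y‖ = ε * ‖y‖ ^ 2 := by ring
      _ ≤ ⟪S y, y⟫ := hS y
      _ ≤ ‖S y‖ * ‖y‖ := real_inner_le_norm _ _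

theorem mul_norm_sq_le_inner_add_smul_one_apply {C : H →L[ℝ] H} (hC : ∀ f, 0 ≤ ⟪C f, f⟫)
    (ε : ℝ) (y : H) : ε * ‖y‖ ^ 2 ≤ ⟪(C + ε • (1 : H →L[ℝ] H)) y, y⟫ := by
  rw [add_apply, inner_add_left, smul_apply, one_apply_eq_self, real_inner_smul_left,
    real_inner_self_eq_norm_sq]
  linarith [hC y]

theorem norm_le_inv_of_add_smul_one_comp_eq_one {C R : H →L[ℝ] H} (hC : ∀ f, 0 ≤ ⟪C f, f⟫)
    {ε : ℝ} (hε : 0 < ε) (hR : (C + ε • (1 : H →L[ℝ] H)) ∘L R = 1) : ‖R‖ ≤ ε⁻¹ :=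
  norm_le_inv_of_comp_eq_one hε
    (mul_norm_le_norm_apply_of_coercive (mul_norm_sq_le_inner_add_smul_one_apply hC ε)) hR

end ContinuousLinearMap

theorem stmt_6_general
    {H : Type*} [NormedAddCommGroup H] [InnerProductSpace ℝ H]
    (CYX CYXhat CXX CXXhat : H →L[ℝ] H)
    (hposC : ∀ f : H, 0 ≤ ⟪CXX f, f⟫) (hposChat : ∀ f : H, 0 ≤ ⟪CXXhat f, f⟫)
    (ε : ℝ) (hε : 0 < ε)
    (R Rhat : H →L[ℝ] H)
    (hR₂ : (CXX + ε • (1 : H →L[ℝ] H)) ∘L R = 1)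
    (hRhat₁ : Rhat ∘L (CXXhat + ε • (1 : H →L[ℝ] H)) = 1)
    (hRhat₂ : (CXXhat + ε • (1 : H →L[ℝ] H)) ∘L Rhat = 1) :
    ‖CYXhat ∘L Rhat - CYX ∘L R‖ ≤
      (1 / ε) * ‖CYXhat - CYX‖ + (‖CYX‖ / ε ^ 2) * ‖CXXhat - CXX‖ := by
  have hbound := norm_mul_sub_mul_le_of_mul_eq_one (y := CYX) (y' := CYXhat)
    (ContinuousLinearMap.norm_le_inv_of_add_smul_one_comp_eq_one hposC hε hR₂)
    (ContinuousLinearMap.norm_le_inv_of_add_smul_one_comp_eq_one hposChat hε hRhat₂)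
    hRhat₁ hR₂
  rw [add_sub_add_right_eq_sub] at hbound
  exact hbound.trans_eq (by ring)

theorem stmt_6
    {H : Type*} [NormedAddCommGroup H] [InnerProductSpace ℝ H] [CompleteSpace H]
    (CYX CYXhat CXX CXXhat : H →L[ℝ] H)
    (hCXX : IsSelfAdjoint CXX) (hCXXhat : IsSelfAdjoint CXXhat)
    (hposC : ∀ f : H, 0 ≤ ⟪CXX f, f⟫) (hposChat : ∀ f : H, 0 ≤ ⟪CXXhat f, f⟫)
    (ε : ℝ) (hε : 0 < ε)
    (R Rhat : H →L[ℝ] H)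
    (hR₁ : R ∘L (CXX + ε • (1 : H →L[ℝ] H)) = 1)
    (hR₂ : (CXX + ε • (1 : H →L[ℝ] H)) ∘L R = 1)
    (hRhat₁ : Rhat ∘L (CXXhat + ε • (1 : H →L[ℝ] H)) = 1)
    (hRhat₂ : (CXXhat + ε • (1 : H →L[ℝ] H)) ∘L Rhat = 1) :
    ‖CYXhat ∘L Rhat - CYX ∘L R‖ ≤
      (1 / ε) * ‖CYXhat - CYX‖ + (‖CYX‖ / ε ^ 2) * ‖CXXhat - CXX‖ :=
  stmt_6_general CYX CYXhat CXX CXXhat hposC hposChat ε hε R Rhat hR₂ hRhat₁ hRhat₂
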